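/- arXiv:1505.01295 — 2 statements merged into one kernel-verified Lean document; each statement's English description precedes it below -/
import Mathlib

section
/- Let μ be a doubled distinct partition with Durfee length D. Then: (a) if 1 ≤ i,j ≤ D, the boxes (i,j) and (j,i) have the same hook length; (b) if 1 ≤ i ≤ D, the hook length of the box (i,i) is twice the hook length of the box (i, D+1); (c) if D+1 ≤ i and 1 ≤ j ≤ D, the boxes (i,j) and (j, i+1) have the same hook length. -/
open scoped Classical

/-- An integer partition, given by its (0-indexed) sequence of parts. -/
structure IntPartition where
  parts : ℕ → ℕ
  antitone : Antitone parts
  finite_support : (Function.support parts).Finite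

namespace IntPartition

/-- The weight `|λ|` of a partition: the sum of its parts. -/
noncomputable def weight (p : IntPartition) : ℕ := p.finite_support.toFinset.sum p.parts

/-- The conjugate partition, as a function: `conj j` is the number of parts `> j`. -/
noncomputable def conj (p : IntPartition) (j : ℕ) : ℕ := {i | j < p.parts i}.ncard

/-- The cells (boxes) of the Ferrers diagram, 0-indexed. -/
def cells (p : IntPartition) : Set (ℕ × ℕ) := {c | c.2 < p.parts c.1}

lemma cells_finite (p : IntPartition) : p.cells.Finite := by
  have hsub : p.cells ⊆ (Function.support p.parts) ×ˢ (Set.Iio (p.parts 0)) := by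
    rintro ⟨i, j⟩ h
    have hj : j < p.parts i := h
    constructor
    · simp only [Function.mem_support]
      omega
    · exact lt_of_lt_of_le hj (p.antitone (Nat.zero_le i))
  exact (p.finite_support.prod (Set.finite_Iio _)).subset hsub

/-- The cells of the Ferrers diagram as a finset. -/
noncomputable def cellsFinset (p : IntPartition) : Finset (ℕ × ℕ) := p.cells_finite.toFinset

/-- Hook length of the (0-indexed) box `(i,j)`:  `λ_i - j + λ*_j - i - 1` (1-indexed formula). -/
noncomputable def hook (p : IntPartition) (i j : ℕ) : ℕ := p.parts i + p.conj j - i - j - 1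

/-- The multiset of hook lengths of all boxes of `p`. -/
noncomputable def hooks (p : IntPartition) : Multiset ℕ :=
  p.cellsFinset.val.map fun c => p.hook c.1 c.2

/-- The Durfee length: the side of the largest square contained in the diagram. -/
noncomputable def durfee (p : IntPartition) : ℕ := {i | i < p.parts i}.ncard

/-- The sign `δ_λ = (-1)^{D(λ)}`. -/
noncomputable def delta (p : IntPartition) : ℤ := (-1) ^ p.durfee

/-- Self-conjugate partitions: `λ = λ*`. -/
noncomputable def IsSelfConjugate (p : IntPartition) : Prop := ∀ j, p.conj j = p.parts j

/-- Doubled distinct partitions: `λ_i = λ*_i + 1` for `i` in the Durfee square. -/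
noncomputable def IsDoubledDistinct (p : IntPartition) : Prop :=
  ∀ i < p.durfee, p.parts i = p.conj i + 1

/-- `t`-cores: partitions with no hook length divisible by `t`. -/
noncomputable def IsCore (t : ℕ) (p : IntPartition) : Prop := ∀ h ∈ p.hooks, ¬ t ∣ h

/-- The multiset of signed hook lengths `ε_h · h`, where `ε_h = -1` for boxes strictly
above the diagonal and `1` otherwise. -/
noncomputable def signedHooks (p : IntPartition) : Multiset ℤ :=
  p.cellsFinset.val.map fun c => (if c.1 < c.2 then -1 else 1) * (p.hook c.1 c.2 : ℤ)

/-- The multiset of signed hook lengths `ε_h · h` over boxes whose hook length is a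
multiple of `t`. -/
noncomputable def signedHooksT (t : ℕ) (p : IntPartition) : Multiset ℤ :=
  (p.cellsFinset.filter fun c => t ∣ p.hook c.1 c.2).val.map
    fun c => (if c.1 < c.2 then -1 else 1) * (p.hook c.1 c.2 : ℤ)

/-- The multiset of principal hook lengths (hooks of diagonal boxes). -/
noncomputable def principalHooks (p : IntPartition) : Multiset ℕ :=
  (Finset.range p.durfee).val.map fun i => p.hook i i

lemma conj_set_finite (p : IntPartition) (j : ℕ) : {i | j < p.parts i}.Finite := by
  apply p.finite_support.subset
  intro i hi
  simp only [Set.mem_setOf_eq] at hi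
  simp only [Function.mem_support]
  omega

/-- The conjugate partition, as a `Partition`. -/
noncomputable def conjugate (p : IntPartition) : IntPartition where
  parts := p.conj
  antitone := fun a b hab =>
    Set.ncard_le_ncard (fun i hi => lt_of_le_of_lt hab hi) (p.conj_set_finite a)
  finite_support := by
    apply (Set.finite_Iio (p.parts 0)).subset
    intro j hj
    obtain ⟨i, hi⟩ := Set.nonempty_of_ncard_ne_zero hj
    exact lt_of_lt_of_le hi (p.antitone (Nat.zero_le i))

end IntPartition

/-- "Infinite" product `∏_{k ≥ 1} f k` of power series, defined coefficientwise;
this is the honest infinite product whenever `f k ≡ 1 mod X^k`. -/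
noncomputable def Pinf {R : Type*} [CommRing R] (f : ℕ → PowerSeries R) : PowerSeries R :=
  PowerSeries.mk fun n => PowerSeries.coeff n (∏ k ∈ Finset.range (n + 1), f (k + 1))

/-- The Euler-type product `E R m = ∏_{k ≥ 1} (1 - x^{m k}) = (q^m; q^m)_∞`. -/
noncomputable def E (R : Type*) [CommRing R] (m : ℕ) : PowerSeries R :=
  Pinf fun k => 1 - PowerSeries.X ^ (m * k)

/-- The binomial series `(1 - x^m)^a` for an exponent `a` in a binomial ring. -/
noncomputable def binomSeries {R : Type*} [CommRing R] [BinomialRing R] (a : R) (m : ℕ) :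
    PowerSeries R :=
  PowerSeries.mk fun n => if m ∣ n then (-1) ^ (n / m) * Ring.choose a (n / m) else 0

/-- `m` is the position of a vertical step (a `0`) in the canonical bi-infinite binary
word of the partition `p`. -/
def zeroPos (p : IntPartition) (m : ℤ) : Prop := ∃ i : ℕ, (p.parts i : ℤ) - i - 1 = m

/-- The Littlewood decomposition, as a relation: `core` and `quot` are the `t`-core and
`t`-quotient of `lam`, expressed via the binary-word encoding: the `k`-th subsequence of
the word of `lam` is the word of `quot k` (up to the shift `s k`), and the `k`-th
subsequence of the word of `core` is the corresponding flushed word `...000111...` with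
the same charge. -/
def IsLittlewood (t : ℕ) (lam core : IntPartition) (quot : ℕ → IntPartition) : Prop :=
  ∃ s : ℕ → ℤ,
    (∀ k < t, ∀ j : ℤ, zeroPos (quot k) j ↔ zeroPos lam (t * (j + s k) + k)) ∧
    (∀ k < t, ∀ j : ℤ, zeroPos core (t * (j + s k) + k) ↔ j < 0)

/-! Proof idea: the conjugate `λ*` and the Durfee length are read off from the fact that the
sets `{i | j < λ_i}` and `{i | i < λ_i}` are finite initial segments of `ℕ`. For a doubled
distinct partition this gives `λ*_D = D` and, below the Durfee square, `λ_i = λ*_{i+1}`: the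
rows under the square are the columns to its right, shifted by one. Each of the three hook
identities is then linear arithmetic in the formula `h(i,j) = λ_i + λ*_j - i - j - 1`,
truncated subtraction being harmless because every box involved lies in the diagram. -/

theorem IsLowerSet.eq_Iio_ncard {s : Set ℕ} (hs : s.Finite) (h : IsLowerSet s) :
    s = Set.Iio s.ncard := by
  rcases h.eq_univ_or_Iio with rfl | ⟨a, rfl⟩
  · exact absurd hs Set.infinite_univ
  · rw [Set.ncard_Iio_nat]

namespace IntPartition

lemma setOf_lt_parts_eq_Iio_conj (p : IntPartition) (j : ℕ) :
    {i | j < p.parts i} = Set.Iio (p.conj j) :=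
  IsLowerSet.eq_Iio_ncard (p.conj_set_finite j) fun _ _ hba ha =>
    lt_of_lt_of_le ha (p.antitone hba)

lemma lt_conj_iff (p : IntPartition) (i j : ℕ) : i < p.conj j ↔ j < p.parts i :=
  (Set.ext_iff.mp (p.setOf_lt_parts_eq_Iio_conj j) i).symm

lemma setOf_lt_parts_self_eq_Iio_durfee (p : IntPartition) :
    {i | i < p.parts i} = Set.Iio p.durfee := by
  refine IsLowerSet.eq_Iio_ncard (p.finite_support.subset fun i hi => ?_)
    fun a b hba ha => lt_of_le_of_lt hba (lt_of_lt_of_le ha (p.antitone hba))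
  exact Nat.ne_zero_of_lt hi

lemma lt_durfee_iff (p : IntPartition) (i : ℕ) : i < p.durfee ↔ i < p.parts i :=
  (Set.ext_iff.mp p.setOf_lt_parts_self_eq_Iio_durfee i).symm

lemma parts_le_durfee (p : IntPartition) {i : ℕ} (hi : p.durfee ≤ i) : p.parts i ≤ p.durfee :=
  (p.antitone hi).trans (not_lt.mp fun h => lt_irrefl _ ((p.lt_durfee_iff _).mpr h))

lemma durfee_le_conj (p : IntPartition) {i : ℕ} (hi : i < p.durfee) : p.durfee ≤ p.conj i := by
  obtain ⟨d, hd⟩ := Nat.exists_eq_add_one_of_ne_zero (Nat.ne_zero_of_lt hi)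
  have hdiag : d < p.parts d := (p.lt_durfee_iff d).mp (by omega)
  have : d < p.conj i := (p.lt_conj_iff d i).mpr (by omega)
  omega

namespace IsDoubledDistinct

variable {p : IntPartition}

lemma conj_durfee (hp : p.IsDoubledDistinct) : p.conj p.durfee = p.durfee := by
  refine eq_of_forall_lt_iff fun k => ?_
  rw [p.lt_conj_iff]
  constructor
  · intro hk
    by_contra! hDk
    exact absurd (p.parts_le_durfee hDk) (not_le.mpr hk)
  · intro hk
    have hDk := p.durfee_le_conj hk
    rw [hp k hk]
    omega

lemma parts_eq_conj_succ (hp : p.IsDoubledDistinct) {i : ℕ} (hi : p.durfee ≤ i) :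
    p.parts i = p.conj (i + 1) := by
  refine eq_of_forall_lt_iff fun j => ?_
  rw [p.lt_conj_iff, ← p.lt_conj_iff]
  rcases lt_or_ge j p.durfee with hj | hj
  · rw [hp j hj]
    omega
  · have h1 := p.parts_le_durfee hj
    have h2 : p.conj j ≤ p.durfee := (p.conjugate.antitone hj).trans hp.conj_durfee.le
    omega

lemma hook_comm (hp : p.IsDoubledDistinct) {i j : ℕ} (hi : i < p.durfee) (hj : j < p.durfee) :
    p.hook i j = p.hook j i := by
  have hpi := hp i hi
  have hpj := hp j hj
  unfold hook
  omega

lemma hook_self (hp : p.IsDoubledDistinct) {i : ℕ} (hi : i < p.durfee) :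
    p.hook i i = 2 * p.hook i p.durfee := by
  have hpi := hp i hi
  have hcD := hp.conj_durfee
  have hci := p.durfee_le_conj hi
  unfold hook
  omega

lemma hook_eq_hook_succ (hp : p.IsDoubledDistinct) {i j : ℕ} (hi : p.durfee ≤ i)
    (hj : j < p.durfee) (hij : (i, j) ∈ p.cells) : p.hook i j = p.hook j (i + 1) := by
  have hpj := hp j hj
  have hpi := hp.parts_eq_conj_succ hi
  have hcj := (p.lt_conj_iff i j).mpr hij
  unfold hook
  omega

end IsDoubledDistinct

end IntPartition

theorem dd_hook_symmetries (p : IntPartition) (hp : p.IsDoubledDistinct) :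
    (∀ i j, i < p.durfee → j < p.durfee → p.hook i j = p.hook j i) ∧
    (∀ i < p.durfee, p.hook i i = 2 * p.hook i p.durfee) ∧
    (∀ i j, p.durfee ≤ i → j < p.durfee → (i, j) ∈ p.cells →
      p.hook i j = p.hook j (i + 1)) :=
  ⟨fun _ _ => hp.hook_comm, fun _ => hp.hook_self, fun _ _ => hp.hook_eq_hook_succ⟩
end

section
/- There is a bijection between t-cores and integer vectors n = (n_0, n_1, ..., n_{t-1}) in Z^t with n_0 + n_1 + ... + n_{t-1} = 0, under which a t-core λ corresponds to a vector n satisfying |λ| = (t/2)·(n_0² + ... + n_{t-1}²) + (0·n_0 + 1·n_1 + ... + (t-1)·n_{t-1}). -/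
open scoped Classical

namespace GKS

open IntPartition

noncomputable section

lemma ncard_Iio_nat (i : ℕ) : (Set.Iio i).ncard = i := by
  rw [← Finset.coe_Iio, Set.ncard_coe_finset, Nat.card_Iio]

lemma ncard_Iic_nat (i : ℕ) : (Set.Iic i).ncard = i + 1 := by
  rw [← Finset.coe_Iic, Set.ncard_coe_finset, Nat.card_Iic]

/-- The beta-numbers of a partition. -/
def beta (p : IntPartition) (i : ℕ) : ℤ := (p.parts i : ℤ) - i - 1

/-- The beta-set of a partition. -/
def B (p : IntPartition) : Set ℤ := Set.range (beta p)

lemma beta_strictAnti (p : IntPartition) : StrictAnti (beta p) := by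
  apply strictAnti_nat_of_succ_lt
  intro i
  have := p.antitone (Nat.le_succ i)
  unfold beta
  have : p.parts (i+1) ≤ p.parts i := p.antitone (Nat.le_succ i)
  push_cast
  omega

lemma lt_conj_iff (p : IntPartition) {i j : ℕ} : i < p.conj j ↔ j < p.parts i := by
  constructor
  · intro h
    by_contra hle
    push_neg at hle
    have hsub : {i' | j < p.parts i'} ⊆ Set.Iio i := by
      intro i' hi'
      simp only [Set.mem_setOf_eq] at hi'
      by_contra hge
      simp only [Set.mem_Iio, not_lt] at hge
      exact absurd (lt_of_lt_of_le hi' (p.antitone hge)) (not_lt.2 hle)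
    have := Set.ncard_le_ncard hsub (Set.finite_Iio i)
    rw [ncard_Iio_nat] at this
    unfold IntPartition.conj at h
    omega
  · intro h
    have hsub : Set.Iic i ⊆ {i' | j < p.parts i'} := by
      intro i' hi'
      exact lt_of_lt_of_le h (p.antitone hi')
    have := Set.ncard_le_ncard hsub (p.conj_set_finite j)
    rw [ncard_Iic_nat] at this
    unfold IntPartition.conj
    omega

lemma conj_le_iff (p : IntPartition) {i j : ℕ} : p.conj j ≤ i ↔ p.parts i ≤ j := by
  rw [← not_lt, lt_conj_iff, not_lt]

/-- `f j = j - conj j`, the candidate "complement" positions. -/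
def f (p : IntPartition) (j : ℕ) : ℤ := (j : ℤ) - p.conj j

lemma conj_antitone (p : IntPartition) : Antitone p.conj := p.conjugate.antitone

lemma f_strictMono (p : IntPartition) : StrictMono (f p) := by
  apply strictMono_nat_of_lt_succ
  intro j
  have : p.conj (j+1) ≤ p.conj j := conj_antitone p (Nat.le_succ j)
  unfold f
  push_cast
  omega

lemma mem_B_iff {p : IntPartition} {x : ℤ} : x ∈ B p ↔ ∃ i, (p.parts i : ℤ) - i - 1 = x :=
  Iff.rfl

lemma beta_mem_B (p : IntPartition) (i : ℕ) : beta p i ∈ B p := ⟨i, rfl⟩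

/-- Everything below `-conj 0` is in the beta-set. -/
lemma mem_B_of_le {p : IntPartition} {x : ℤ} (hx : x ≤ -(p.conj 0 : ℤ) - 1) : x ∈ B p := by
  set i := (-x - 1).toNat with hi
  have hxi : (i : ℤ) = -x - 1 := Int.toNat_of_nonneg (by omega)
  have hci : p.conj 0 ≤ i := by omega
  have hparts : p.parts i = 0 := by
    have := (conj_le_iff p).1 hci
    omega
  exact ⟨i, by show (p.parts i : ℤ) - i - 1 = x; rw [hparts]; push_cast; omega⟩

/-- Elements not in the beta-set are `≥ f 0 = -conj 0`. -/
lemma le_of_not_mem_B {p : IntPartition} {x : ℤ} (hx : x ∉ B p) : -(p.conj 0 : ℤ) ≤ x := by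
  by_contra h
  exact hx (mem_B_of_le (by omega))

/-- `f j` is never in the beta-set. -/
lemma f_not_mem_B (p : IntPartition) (j : ℕ) : f p j ∉ B p := by
  rintro ⟨i, hi⟩
  unfold beta f at hi
  rcases lt_or_ge i (p.conj j) with h | h
  · have := (lt_conj_iff p).1 h
    omega
  · have := (conj_le_iff p).1 h
    omega

/-- Values skipped by `f` lie in the beta-set. -/
lemma mem_B_of_skipped {p : IntPartition} {j : ℕ} {c : ℤ} (h1 : f p j < c) (h2 : c < f p (j+1)) :
    c ∈ B p := by
  have hj : (0:ℤ) ≤ (j:ℤ) - c := by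
    unfold f at h2; push_cast at h2; omega
  set i := ((j:ℤ) - c).toNat with hidef
  have hic : (i : ℤ) = (j:ℤ) - c := Int.toNat_of_nonneg hj
  have hlt : i < p.conj j := by unfold f at h1; omega
  have hge : p.conj (j+1) ≤ i := by unfold f at h2; push_cast at h2; omega
  have h3 := (lt_conj_iff p).1 hlt
  have h4 := (conj_le_iff p).1 hge
  exact ⟨i, by show (p.parts i : ℤ) - i - 1 = c; push_cast; omega⟩

end

end GKS
namespace GKS
noncomputable section

lemma mem_hooks_iff {p : IntPartition} {h : ℕ} :
    h ∈ p.hooks ↔ ∃ i j, j < p.parts i ∧ p.hook i j = h := by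
  unfold IntPartition.hooks
  simp only [Multiset.mem_map, Finset.mem_val]
  constructor
  · rintro ⟨⟨i, j⟩, hc, rfl⟩
    refine ⟨i, j, ?_, rfl⟩
    have := (Set.Finite.mem_toFinset _).1 hc
    exact this
  · rintro ⟨i, j, hij, rfl⟩
    exact ⟨⟨i, j⟩, (Set.Finite.mem_toFinset _).2 hij, rfl⟩

lemma hook_int {p : IntPartition} {i j : ℕ} (hij : j < p.parts i) :
    (p.hook i j : ℤ) = beta p i - f p j ∧ 1 ≤ p.hook i j := by
  have hc : i + 1 ≤ p.conj j := (lt_conj_iff p).2 hij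
  unfold IntPartition.hook beta f
  constructor
  · push_cast [Nat.sub_sub]
    omega
  · omega

/-- Intermediate value property: every non-beta value below `beta i` is hit by `f`. -/
lemma exists_f_eq {p : IntPartition} {i : ℕ} {c : ℤ} (hi : 0 < p.parts i)
    (hc : c ∉ B p) (hlt : c < beta p i) : ∃ j < p.parts i, f p j = c := by
  have h0 : f p 0 ≤ c := by
    have := le_of_not_mem_B hc
    unfold f; push_cast; omega
  have htop : c < f p (p.parts i) := by
    have h1 : p.conj (p.parts i) ≤ i := (conj_le_iff p).2 (le_refl _)
    unfold f; unfold beta at hlt; omega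
  set j := Nat.findGreatest (fun j => f p j ≤ c) (p.parts i) with hj
  have hspec : f p j ≤ c :=
    Nat.findGreatest_spec (P := fun j => f p j ≤ c) (Nat.zero_le _) h0
  have hjlt : j < p.parts i := by
    rcases Nat.lt_or_ge j (p.parts i) with h | h
    · exact h
    · exfalso
      have hle : j ≤ p.parts i := Nat.findGreatest_le _
      have : j = p.parts i := le_antisymm hle h
      rw [this] at hspec; omega
  have hnext : ¬ f p (j+1) ≤ c := by
    intro hcon
    exact absurd hcon (Nat.findGreatest_is_greatest (Nat.lt_succ_self j) hjlt)
  push_neg at hnext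
  rcases eq_or_lt_of_le hspec with h | h
  · exact ⟨j, hjlt, h⟩
  · exact absurd (mem_B_of_skipped h hnext) hc

/-- The beta-set of a `t`-core is closed under subtracting `t`. -/
lemma isCore_iff_closed (t : ℕ) (p : IntPartition) :
    p.IsCore t ↔ ∀ x ∈ B p, x - t ∈ B p := by
  constructor
  · intro hcore x hx
    rcases hx with ⟨i, hi⟩
    rcases Nat.eq_zero_or_pos (p.parts i) with h0 | h0
    · -- vacuum row: x = -i-1, and x - t = beta (i + t)
      have hci : p.conj 0 ≤ i := (conj_le_iff p).2 (by omega)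
      have : p.parts (i + t) = 0 := by
        have := (conj_le_iff p).1 (le_trans hci (Nat.le_add_right i t))
        omega
      refine ⟨i + t, ?_⟩
      show (p.parts (i+t) : ℤ) - (i+t) - 1 = x - t
      rw [this, ← hi]
      unfold beta
      rw [h0]
      push_cast
      ring
    · by_contra hnot
      have hlt : x - t < beta p i := by
        rcases Nat.eq_zero_or_pos t with rfl | htpos
        · exact absurd (by simpa using hi ▸ beta_mem_B p i : x - 0 ∈ B p) (by simpa using hnot)
        · rw [← hi]; unfold beta; unfold beta at hi; omega
      rcases exists_f_eq h0 hnot (hi ▸ hlt) with ⟨j, hjlt, hfj⟩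
      have hhook := hook_int hjlt
      have : (p.hook i j : ℤ) = t := by rw [hhook.1, hfj, hi]; ring
      have ht' : p.hook i j = t := by exact_mod_cast this
      exact hcore _ (mem_hooks_iff.2 ⟨i, j, hjlt, rfl⟩) (ht' ▸ dvd_refl _)
  · intro hcl h hh hdvd
    rcases mem_hooks_iff.1 hh with ⟨i, j, hij, rfl⟩
    have hhook := hook_int hij
    rcases hdvd with ⟨m, hm⟩
    have hm1 : 1 ≤ m := by nlinarith [hhook.2, Nat.zero_le t, Nat.zero_le m, hm]
    have hmem : ∀ n : ℕ, beta p i - t * (n+1) ∈ B p := by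
      intro n
      induction n with
      | zero => simpa using hcl _ (beta_mem_B p i)
      | succ n ih =>
          have := hcl _ ih
          have he : beta p i - ↑t * (↑n + 1) - ↑t = beta p i - ↑t * (↑(n+1) + 1) := by
            push_cast; ring
          rwa [he] at this
    have : f p j ∈ B p := by
      have h2 := hmem (m - 1)
      have he : beta p i - ↑t * (↑(m-1) + 1) = f p j := by
        have : (p.hook i j : ℤ) = t * m := by exact_mod_cast hm
        rw [hhook.1] at this
        push_cast [Nat.cast_sub hm1]
        push_cast at this
        linarith
      rwa [he] at h2
    exact f_not_mem_B p j this

end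
end GKS
namespace GKS
noncomputable section

variable {t : ℕ}

/-- `v` is the GKS vector of `p`. -/
def Spec (t : ℕ) (p : IntPartition) (v : Fin t → ℤ) : Prop :=
  ∀ (k : Fin t) (j : ℤ), (t * j + (k : ℤ) ∈ B p ↔ j < v k)

lemma spec_unique {p : IntPartition} {v w : Fin t → ℤ} (hv : Spec t p v) (hw : Spec t p w) :
    v = w := by
  funext k
  by_contra hne
  rcases lt_or_gt_of_ne hne with h | h
  · exact absurd ((hv k (v k)).1 ((hw k (v k)).2 h)) (lt_irrefl _)
  · exact absurd ((hw k (w k)).1 ((hv k (w k)).2 h)) (lt_irrefl _)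

lemma beta_le_beta_zero (p : IntPartition) (i : ℕ) : beta p i ≤ beta p 0 :=
  (beta_strictAnti p).antitone (Nat.zero_le i)

lemma exists_spec (ht : 0 < t) {p : IntPartition} (hp : p.IsCore t) : ∃ v, Spec t p v := by
  have hcl := (isCore_iff_closed t p).1 hp
  have key : ∀ k : Fin t, ∃ n : ℤ, ∀ j : ℤ, (t * j + (k : ℤ) ∈ B p ↔ j < n) := by
    intro k
    have hk0 : (0:ℤ) ≤ (k:ℤ) := Int.natCast_nonneg _
    have hkt : (k:ℤ) < t := by exact_mod_cast k.isLt
    have ht1 : (1:ℤ) ≤ t := by exact_mod_cast ht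
    -- the set of j with t*j+k ∉ B p
    have hbddbelow : ∀ j : ℤ, j ≤ -(p.conj 0 : ℤ) - 1 → t * j + k ∈ B p := by
      intro j hj
      apply mem_B_of_le
      nlinarith [Int.natCast_nonneg (p.conj 0)]
    have hnonempty : ∃ j : ℤ, t * j + (k:ℤ) ∉ B p := by
      refine ⟨|beta p 0| + 1, fun hmem => ?_⟩
      rcases hmem with ⟨i, hi⟩
      have h1 := beta_le_beta_zero p i
      have h2 : beta p 0 ≤ |beta p 0| := le_abs_self _
      rw [hi] at h1
      nlinarith [abs_nonneg (beta p 0)]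
    obtain ⟨n, hnmem, hnleast⟩ := Int.exists_least_of_bdd
      (P := fun j => ↑t * j + (k:ℤ) ∉ B p)
      ⟨-(p.conj 0 : ℤ), by
        intro j hj
        by_contra hlt
        push_neg at hlt
        exact hj (hbddbelow j (by omega))⟩ hnonempty
    refine ⟨n, fun j => ⟨?_, ?_⟩⟩
    · intro hmem
      by_contra hge
      push_neg at hge
      -- j ≥ n : show t*j+k ∉ B p by induction from n
      have : ∀ j : ℤ, n ≤ j → t * j + (k:ℤ) ∉ B p := by
        intro j hj
        refine Int.le_induction (motive := fun j _ => t * j + (k:ℤ) ∉ B p) hnmem ?_ j hj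
        intro m _ ih hmem'
        have hmm := hcl _ hmem'
        have he : t * (m + 1) + (k:ℤ) - t = t * m + k := by ring
        rw [he] at hmm
        exact ih hmm
      exact this j hge hmem
    · intro hj
      by_contra hnot
      exact absurd (hnleast j hnot) (by omega)
  choose v hv using key
  exact ⟨v, hv⟩

end
end GKS
namespace GKS
noncomputable section

lemma sum_Ico_int (a : ℤ) : ∀ b : ℤ, a ≤ b →
    2 * (∑ j ∈ Finset.Ico a b, j) = (b - a) * (a + b - 1) := by
  intro b hb
  refine Int.le_induction (motive := fun b _ => 2 * (∑ j ∈ Finset.Ico a b, j) = (b - a) * (a + b - 1)) ?_ ?_ b hb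
  · simp
  · intro n hn ih
    have hins : Finset.Ico a (n + 1) = insert n (Finset.Ico a n) := by
      ext x
      simp only [Finset.mem_Ico, Finset.mem_insert]
      omega
    rw [hins, Finset.sum_insert (by simp)]
    linear_combination ih

lemma sum_range_succ_int (M : ℕ) :
    2 * (∑ i ∈ Finset.range M, ((i : ℤ) + 1)) = M * (M + 1) := by
  induction M with
  | zero => simp
  | succ n ih =>
      rw [Finset.sum_range_succ]
      push_cast
      linear_combination ih

lemma sum_fin_int (t : ℕ) : 2 * (∑ k : Fin t, ((k : ℕ) : ℤ)) = t * (t - 1) := by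
  rw [Fin.sum_univ_eq_sum_range (fun i => ((i : ℕ) : ℤ))]
  induction t with
  | zero => simp
  | succ n ih =>
      rw [Finset.sum_range_succ]
      push_cast
      push_cast at ih
      linear_combination ih

/-- Injectivity of `(j, k) ↦ t*j + k`. -/
lemma tjk_inj {t : ℕ} (ht : 0 < t) {j j' k k' : ℤ} (hk : 0 ≤ k) (hk' : k < t)
    (hl : 0 ≤ k') (hl' : k' < t) (h : t * j + k = t * j' + k') : j = j' ∧ k = k' := by
  have ht' : (0:ℤ) < t := by exact_mod_cast ht
  have h1 : (t * j + k) % t = k := by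
    rw [add_comm, Int.add_mul_emod_self_left, Int.emod_eq_of_lt hk hk']
  have h2 : (t * j' + k') % t = k' := by
    rw [add_comm, Int.add_mul_emod_self_left, Int.emod_eq_of_lt hl hl']
  have hkk : k = k' := by rw [← h1, ← h2, h]
  refine ⟨?_, hkk⟩
  have : t * j = t * j' := by omega
  exact mul_left_cancel₀ (by omega) this

end
end GKS
namespace GKS
noncomputable section

variable {t : ℕ}

lemma spec_vge (ht : 0 < t) {p : IntPartition} {v : Fin t → ℤ} (hv : Spec t p v) (k : Fin t) :
    -(p.conj 0 : ℤ) ≤ v k := by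
  have hkt : ((k:ℕ):ℤ) < t := by exact_mod_cast k.isLt
  have hk0 : (0:ℤ) ≤ ((k:ℕ):ℤ) := Int.natCast_nonneg _
  have ht1 : (1:ℤ) ≤ t := by exact_mod_cast ht
  have hmem : (t:ℤ) * (-(p.conj 0 : ℤ) - 1) + ((k:ℕ):ℤ) ∈ B p := by
    apply mem_B_of_le
    nlinarith [Int.natCast_nonneg (p.conj 0)]
  have := (hv k _).1 hmem
  omega

/-- The main counting identities extracted from a `Spec`. -/
lemma spec_main (ht : 0 < t) {p : IntPartition} {v : Fin t → ℤ} (hv : Spec t p v) :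
    (∑ k, v k = 0) ∧
    2 * (p.weight : ℤ) = ∑ k : Fin t, ((t:ℤ) * (v k)^2 + 2 * ((k:ℕ):ℤ) * (v k)) := by
  classical
  set N : ℕ := p.conj 0 with hN
  set M : ℕ := t * N with hM
  have ht' : (0:ℤ) < t := by exact_mod_cast ht
  have hNM : N ≤ M := Nat.le_mul_of_pos_left N ht
  -- membership characterizations
  have hchar1 : ∀ i : ℕ, i < M ↔ -(M:ℤ) ≤ beta p i := by
    intro i
    constructor
    · intro hi
      unfold beta
      push_cast
      omega
    · intro hi
      by_contra hge
      push_neg at hge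
      have h0 : p.parts i = 0 := by
        have := (conj_le_iff p (i := i) (j := 0)).1 (le_trans hNM hge)
        omega
      have : beta p i = -(i:ℤ) - 1 := by unfold beta; rw [h0]; push_cast; ring
      rw [this] at hi
      push_cast at hi
      omega
  -- the two finsets
  set g : Fin t → Finset ℤ :=
    fun k => (Finset.Ico (-(N:ℤ)) (v k)).image (fun j => (t:ℤ) * j + ((k:ℕ):ℤ)) with hg
  set S : Finset ℤ := (Finset.range M).image (beta p) with hS
  have hvge : ∀ k, -(N:ℤ) ≤ v k := spec_vge ht hv
  have hSeq : S = Finset.univ.biUnion g := by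
    ext x
    simp only [hS, hg, Finset.mem_image, Finset.mem_range, Finset.mem_biUnion,
      Finset.mem_univ, true_and, Finset.mem_Ico]
    constructor
    · rintro ⟨i, hi, rfl⟩
      have hx : -(M:ℤ) ≤ beta p i := (hchar1 i).1 hi
      set x := beta p i with hxd
      have hxB : x ∈ B p := beta_mem_B p i
      have hmod0 : 0 ≤ x % t := Int.emod_nonneg x (by omega)
      have hmodt : x % t < t := Int.emod_lt_of_pos x ht'
      refine ⟨⟨(x % t).toNat, by omega⟩, x / t, ⟨?_, ?_⟩, ?_⟩
      · -- -N ≤ x / t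
        have hxe : (t:ℤ) * (x / t) + x % t = x := Int.mul_ediv_add_emod x t
        have he : (t:ℤ) * (-(N:ℤ) - 1) = -(M:ℤ) - t := by rw [hM]; push_cast; ring
        have hlt : (t:ℤ) * (-(N:ℤ) - 1) < t * (x / t) := by omega
        have := lt_of_mul_lt_mul_left hlt (le_of_lt ht')
        omega
      · -- x / t < v k
        have hxe : (t:ℤ) * (x / t) + x % t = x := Int.mul_ediv_add_emod x t
        have hcast : ((((x % t).toNat : ℕ)) : ℤ) = x % t := Int.toNat_of_nonneg hmod0
        have := (hv ⟨(x % t).toNat, by omega⟩ (x / t)).1 (by rw [show ((((⟨(x % t).toNat, by omega⟩ : Fin t) : ℕ)) : ℤ) = x % t from hcast, hxe]; exact hxB)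
        exact this
      · have hxe : (t:ℤ) * (x / t) + x % t = x := Int.mul_ediv_add_emod x t
        have hcast : ((((x % t).toNat : ℕ)) : ℤ) = x % t := Int.toNat_of_nonneg hmod0
        rw [show ((((⟨(x % t).toNat, by omega⟩ : Fin t) : ℕ)) : ℤ) = x % t from hcast]
        exact hxe
    · rintro ⟨k, j, ⟨hj1, hj2⟩, rfl⟩
      have hxB : (t:ℤ) * j + ((k:ℕ):ℤ) ∈ B p := (hv k j).2 hj2
      rcases hxB with ⟨i, hi⟩
      refine ⟨i, ?_, hi⟩
      rw [hchar1, hi]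
      have hk0 : (0:ℤ) ≤ ((k:ℕ):ℤ) := Int.natCast_nonneg _
      have hmul := mul_le_mul_of_nonneg_left hj1 (le_of_lt ht')
      have he : (M:ℤ) = (t:ℤ) * (N:ℤ) := by rw [hM]; push_cast; ring
      have he2 : (t:ℤ) * (-(N:ℤ)) = -((t:ℤ) * (N:ℤ)) := by ring
      omega
  -- disjointness
  have hdisj : (↑(Finset.univ : Finset (Fin t)) : Set (Fin t)).PairwiseDisjoint g := by
    intro k _ k' _ hkk
    apply Finset.disjoint_left.2
    intro x hx hx'
    simp only [hg, Finset.mem_image, Finset.mem_Ico] at hx hx'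
    rcases hx with ⟨j, _, hj⟩
    rcases hx' with ⟨j', _, hj'⟩
    have hk : ((k:ℕ):ℤ) < t := by exact_mod_cast k.isLt
    have hk' : ((k':ℕ):ℤ) < t := by exact_mod_cast k'.isLt
    have := tjk_inj ht (Int.natCast_nonneg _) hk (Int.natCast_nonneg _) hk' (hj.trans hj'.symm)
    exact hkk (by
      apply Fin.ext
      exact_mod_cast this.2)
  -- injectivity of the image maps
  have hinj : ∀ k : Fin t, Function.Injective (fun j => (t:ℤ) * j + ((k:ℕ):ℤ)) := by
    intro k a b hab
    simp only at hab
    have : (t:ℤ) * a = t * b := by omega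
    exact mul_left_cancel₀ (by omega) this
  have hbinj : Function.Injective (beta p) := (beta_strictAnti p).injective
  -- card identity
  have hcard : (M:ℤ) = ∑ k : Fin t, (v k + N) := by
    have h1 : S.card = M := by
      rw [hS, Finset.card_image_of_injective _ hbinj, Finset.card_range]
    have h2 : S.card = ∑ k : Fin t, (g k).card := by
      rw [hSeq]
      exact Finset.card_biUnion (fun x hx y hy hxy => hdisj hx hy hxy)
    have h3 : ∀ k : Fin t, ((g k).card : ℤ) = v k + N := by
      intro k
      rw [hg]
      simp only
      rw [Finset.card_image_of_injective _ (hinj k), Int.card_Ico, Int.toNat_of_nonneg (by have := hvge k; omega)]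
      ring
    calc (M:ℤ) = (S.card : ℤ) := by rw [h1]
      _ = ((∑ k : Fin t, (g k).card : ℕ) : ℤ) := by rw [h2]
      _ = ∑ k : Fin t, ((g k).card : ℤ) := Nat.cast_sum _ _
      _ = ∑ k : Fin t, (v k + N) := Finset.sum_congr rfl (fun k _ => h3 k)
  have hsumv : ∑ k, v k = 0 := by
    have hexp : ∑ k : Fin t, (v k + (N:ℤ)) = (∑ k, v k) + t * N := by
      rw [Finset.sum_add_distrib, Finset.sum_const, Finset.card_univ, Fintype.card_fin,
        nsmul_eq_mul]
    rw [hexp] at hcard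
    push_cast at hcard
    omega
  refine ⟨hsumv, ?_⟩
  -- weight identity
  have hWsum : (p.weight : ℤ) = ∑ i ∈ Finset.range M, ((p.parts i : ℤ)) := by
    unfold IntPartition.weight
    have hsub : p.finite_support.toFinset ⊆ Finset.range M := by
      intro i hi
      rw [Set.Finite.mem_toFinset, Function.mem_support] at hi
      rw [Finset.mem_range]
      have : i < p.conj 0 := (lt_conj_iff p).2 (by omega)
      omega
    rw [Finset.sum_subset hsub (by
      intro i _ hi
      rw [Set.Finite.mem_toFinset, Function.mem_support] at hi
      push_neg at hi
      exact hi)]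
    push_cast; ring
  have hWbeta : (p.weight : ℤ) = (∑ i ∈ Finset.range M, beta p i) + ∑ i ∈ Finset.range M, ((i:ℤ) + 1) := by
    rw [hWsum, ← Finset.sum_add_distrib]
    apply Finset.sum_congr rfl
    intro i _
    unfold beta
    ring
  have hsumS : ∑ i ∈ Finset.range M, beta p i = ∑ x ∈ S, x := by
    rw [hS, Finset.sum_image (fun a _ b _ h => hbinj h)]
  have hsumB : ∑ x ∈ S, x = ∑ k : Fin t, ∑ x ∈ g k, x := by
    rw [hSeq]
    exact Finset.sum_biUnion hdisj
  have hgk : ∀ k : Fin t, 2 * ∑ x ∈ g k, x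
      = (t:ℤ) * ((v k + N) * (v k - N - 1)) + 2 * (v k + N) * ((k:ℕ):ℤ) := by
    intro k
    rw [hg]
    simp only
    rw [Finset.sum_image (fun a _ b _ h => hinj k h)]
    rw [Finset.sum_add_distrib, ← Finset.mul_sum, Finset.sum_const, Int.card_Ico,
      nsmul_eq_mul, Int.toNat_of_nonneg (a := v k - -(N:ℤ)) (by have := hvge k; omega)]
    have hG := sum_Ico_int (-(N:ℤ)) (v k) (hvge k)
    linear_combination (t:ℤ) * hG
  -- assemble
  have hT := sum_range_succ_int M
  have hK := sum_fin_int t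
  have e1 : 2 * (p.weight : ℤ)
      = ∑ k : Fin t, ((t:ℤ) * ((v k + N) * (v k - N - 1)) + 2 * (v k + N) * ((k:ℕ):ℤ))
        + (M:ℤ) * (M + 1) := by
    rw [← Finset.sum_congr rfl (fun k _ => hgk k)]
    rw [← Finset.mul_sum, ← hsumB, ← hsumS]
    linear_combination 2 * hWbeta + hT
  rw [e1]
  have e2 : ∀ k : Fin t, (t:ℤ) * ((v k + N) * (v k - N - 1)) + 2 * (v k + N) * ((k:ℕ):ℤ)
      = ((t:ℤ) * (v k)^2 + 2 * ((k:ℕ):ℤ) * (v k)) + (-(t:ℤ)) * (v k)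
        + (-(t:ℤ) * (N:ℤ)^2 - (t:ℤ) * (N:ℤ)) + (2 * (N:ℤ)) * ((k:ℕ):ℤ) := fun k => by ring
  rw [Finset.sum_congr rfl (fun k _ => e2 k)]
  rw [Finset.sum_add_distrib, Finset.sum_add_distrib, Finset.sum_add_distrib,
    ← Finset.mul_sum, ← Finset.mul_sum, hsumv, Finset.sum_const, Finset.card_univ,
    Fintype.card_fin, nsmul_eq_mul]
  have hMc : (M:ℤ) = (t:ℤ) * (N:ℤ) := by rw [hM]; push_cast; ring
  linear_combination (N:ℤ) * hK + ((M:ℤ) + 1 + (t:ℤ)*(N:ℤ)) * hMc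

end
end GKS
namespace GKS
noncomputable section

variable {t : ℕ}

lemma partition_ext {p q : IntPartition} (h : p.parts = q.parts) : p = q := by
  cases p; cases q; simpa using h

lemma B_inter_Ioi (p : IntPartition) (i : ℕ) :
    B p ∩ Set.Ioi (beta p i) = beta p '' Set.Iio i := by
  ext x
  simp only [Set.mem_inter_iff, Set.mem_Ioi, Set.mem_image, Set.mem_Iio]
  constructor
  · rintro ⟨⟨i', rfl⟩, hgt⟩
    exact ⟨i', (beta_strictAnti p).lt_iff_gt.1 hgt, rfl⟩
  · rintro ⟨i', hi', rfl⟩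
    exact ⟨beta_mem_B p i', (beta_strictAnti p) hi'⟩

lemma eq_of_B_eq {p q : IntPartition} (h : B p = B q) : p = q := by
  have hbeta : ∀ i, beta p i = beta q i := by
    intro i
    induction i using Nat.strong_induction_on with
    | _ i ih =>
      have himg : beta p '' Set.Iio i = beta q '' Set.Iio i := by
        apply Set.image_congr
        intro i' hi'
        exact ih i' hi'
      have h1 : B p ∩ Set.Ioi (beta p i) = B p ∩ Set.Ioi (beta q i) := by
        rw [B_inter_Ioi, himg, h, ← B_inter_Ioi]
      have hple : beta p i ≤ beta q i := by
        by_contra hlt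
        push_neg at hlt
        have : beta p i ∈ B p ∩ Set.Ioi (beta q i) := ⟨beta_mem_B p i, Set.mem_Ioi.2 hlt⟩
        rw [← h1] at this
        exact lt_irrefl _ (Set.mem_Ioi.1 this.2)
      have hqle : beta q i ≤ beta p i := by
        by_contra hlt
        push_neg at hlt
        have : beta q i ∈ B p ∩ Set.Ioi (beta p i) := ⟨h ▸ beta_mem_B q i, Set.mem_Ioi.2 hlt⟩
        rw [h1] at this
        exact lt_irrefl _ (Set.mem_Ioi.1 this.2)
      omega
  apply partition_ext
  funext i
  have := hbeta i
  unfold beta at this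
  omega

lemma B_eq_of_spec (ht : 0 < t) {p : IntPartition} {v : Fin t → ℤ} (hv : Spec t p v) (x : ℤ) :
    x ∈ B p ↔ x / t < v ⟨(x % t).toNat, by
      have h1 : 0 ≤ x % t := Int.emod_nonneg x (by positivity)
      have h2 : x % t < t := Int.emod_lt_of_pos x (by exact_mod_cast ht)
      omega⟩ := by
  have h1 : 0 ≤ x % t := Int.emod_nonneg x (by positivity)
  have h2 : x % t < t := Int.emod_lt_of_pos x (by exact_mod_cast ht)
  have hxe : (t:ℤ) * (x / t) + x % t = x := Int.mul_ediv_add_emod x t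
  have hcast : (((x % t).toNat : ℕ) : ℤ) = x % t := Int.toNat_of_nonneg h1
  have this1 := hv ⟨(x % t).toNat, by omega⟩ (x / t)
  have key : (t:ℤ) * (x / t) + ((((⟨(x % t).toNat, by omega⟩ : Fin t) : ℕ)) : ℤ) = x := by
    rw [show ((((⟨(x % t).toNat, by omega⟩ : Fin t) : ℕ)) : ℤ) = x % t from hcast]
    exact hxe
  rw [key] at this1
  exact this1

lemma spec_injective (ht : 0 < t) {p q : IntPartition} {v : Fin t → ℤ}
    (hp : Spec t p v) (hq : Spec t q v) : p = q := by
  apply eq_of_B_eq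
  ext x
  rw [B_eq_of_spec ht hp x, B_eq_of_spec ht hq x]

end
end GKS
namespace GKS
noncomputable section

/-! ### Enumeration of a co-well-ordered subset of ℤ -/

variable (S : Set ℤ) (a0 b0 : ℤ)

/-- The greatest element of `S` below `x`. -/
def gstep (hub : ∀ x ∈ S, x ≤ b0) (hlb : ∀ x ≤ a0, x ∈ S) (x : ℤ) : ℤ :=
  Classical.choose (Int.exists_greatest_of_bdd (P := fun y => y ∈ S ∧ y < x)
    ⟨b0, fun z hz => hub z hz.1⟩
    ⟨min a0 (x-1), hlb _ (min_le_left _ _), by have := min_le_right a0 (x-1); omega⟩)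

lemma gstep_spec (hub : ∀ x ∈ S, x ≤ b0) (hlb : ∀ x ≤ a0, x ∈ S) (x : ℤ) :
    gstep S a0 b0 hub hlb x ∈ S ∧ gstep S a0 b0 hub hlb x < x ∧
      ∀ z ∈ S, z < x → z ≤ gstep S a0 b0 hub hlb x := by
  have h := Classical.choose_spec (Int.exists_greatest_of_bdd (P := fun y => y ∈ S ∧ y < x)
    ⟨b0, fun z hz => hub z hz.1⟩
    ⟨min a0 (x-1), hlb _ (min_le_left _ _), by have := min_le_right a0 (x-1); omega⟩)
  exact ⟨h.1.1, h.1.2, fun z hz hzx => h.2 z ⟨hz, hzx⟩⟩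

/-- The decreasing enumeration of `S`. -/
def enum (hub : ∀ x ∈ S, x ≤ b0) (hlb : ∀ x ≤ a0, x ∈ S) : ℕ → ℤ
  | 0 => gstep S a0 b0 hub hlb (b0 + 1)
  | (i+1) => gstep S a0 b0 hub hlb (enum hub hlb i)

variable (hub : ∀ x ∈ S, x ≤ b0) (hlb : ∀ x ≤ a0, x ∈ S)

lemma enum_mem : ∀ i, enum S a0 b0 hub hlb i ∈ S
  | 0 => (gstep_spec S a0 b0 hub hlb _).1
  | (i+1) => (gstep_spec S a0 b0 hub hlb _).1

lemma enum_succ_lt (i : ℕ) : enum S a0 b0 hub hlb (i+1) < enum S a0 b0 hub hlb i :=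
  (gstep_spec S a0 b0 hub hlb _).2.1

lemma enum_strictAnti : StrictAnti (enum S a0 b0 hub hlb) :=
  strictAnti_nat_of_succ_lt (enum_succ_lt S a0 b0 hub hlb)

lemma enum_Ioi : ∀ i : ℕ,
    S ∩ Set.Ioi (enum S a0 b0 hub hlb i) = enum S a0 b0 hub hlb '' Set.Iio i := by
  intro i
  induction i with
  | zero =>
      ext x
      simp only [Set.mem_inter_iff, Set.mem_Ioi, Set.mem_image, Set.mem_Iio]
      constructor
      · rintro ⟨hx, hgt⟩
        exfalso
        have := (gstep_spec S a0 b0 hub hlb (b0+1)).2.2 x hx (by have := hub x hx; omega)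
        show False
        have h0 : enum S a0 b0 hub hlb 0 = gstep S a0 b0 hub hlb (b0+1) := rfl
        rw [h0] at hgt
        omega
      · rintro ⟨i', hi', _⟩
        omega
  | succ i ih =>
      ext x
      simp only [Set.mem_inter_iff, Set.mem_Ioi, Set.mem_image, Set.mem_Iio]
      constructor
      · rintro ⟨hx, hgt⟩
        rcases lt_trichotomy x (enum S a0 b0 hub hlb i) with hlt | heq | hgt'
        · -- impossible: x ∈ S, x < enum i, x > enum (i+1) = gstep (enum i)
          exfalso
          have := (gstep_spec S a0 b0 hub hlb (enum S a0 b0 hub hlb i)).2.2 x hx hlt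
          have h0 : enum S a0 b0 hub hlb (i+1) = gstep S a0 b0 hub hlb (enum S a0 b0 hub hlb i) := rfl
          rw [h0] at hgt
          omega
        · exact ⟨i, Nat.lt_succ_self i, heq.symm⟩
        · have : x ∈ S ∩ Set.Ioi (enum S a0 b0 hub hlb i) := ⟨hx, hgt'⟩
          rw [ih] at this
          rcases this with ⟨i', hi', rfl⟩
          exact ⟨i', Nat.lt_succ_of_lt hi', rfl⟩
      · rintro ⟨i', hi', rfl⟩
        refine ⟨enum_mem S a0 b0 hub hlb i', ?_⟩
        rcases Nat.lt_succ_iff_lt_or_eq.1 hi' with h | rfl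
        · exact lt_trans (enum_succ_lt S a0 b0 hub hlb i)
            ((enum_strictAnti S a0 b0 hub hlb) h)
        · exact enum_succ_lt S a0 b0 hub hlb i'

lemma enum_ncard_Ioi (i : ℕ) :
    (S ∩ Set.Ioi (enum S a0 b0 hub hlb i)).ncard = i := by
  rw [enum_Ioi, Set.ncard_image_of_injective _ (enum_strictAnti S a0 b0 hub hlb).injective,
    ncard_Iio_nat]

lemma inter_Ioi_finite' {S' : Set ℤ} {b0' : ℤ} (hub' : ∀ x ∈ S', x ≤ b0') (x : ℤ) :
    (S' ∩ Set.Ioi x).Finite := by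
  apply (Set.finite_Icc (x+1) b0').subset
  rintro y ⟨hy, hgt⟩
  exact ⟨by simpa using hgt, hub' y hy⟩

lemma enum_surj {x : ℤ} (hx : x ∈ S) : ∃ i, enum S a0 b0 hub hlb i = x := by
  set r := (S ∩ Set.Ioi x).ncard with hr
  refine ⟨r, ?_⟩
  have hcard := enum_ncard_Ioi S a0 b0 hub hlb r
  rcases lt_trichotomy (enum S a0 b0 hub hlb r) x with hlt | heq | hgt
  · exfalso
    have : x ∈ S ∩ Set.Ioi (enum S a0 b0 hub hlb r) := ⟨hx, hlt⟩
    rw [enum_Ioi] at this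
    rcases this with ⟨j, hj, hje⟩
    have hj2 : (S ∩ Set.Ioi x).ncard = j := by
      rw [← hje, enum_ncard_Ioi]
    rw [hr, hj2] at hj
    exact absurd hj (lt_irrefl j)
  · exact heq
  · exfalso
    have hsub : insert (enum S a0 b0 hub hlb r) (S ∩ Set.Ioi (enum S a0 b0 hub hlb r))
        ⊆ S ∩ Set.Ioi x := by
      intro y hy
      rcases Set.mem_insert_iff.1 hy with rfl | ⟨h1, h2⟩
      · exact ⟨enum_mem S a0 b0 hub hlb r, hgt⟩
      · exact ⟨h1, lt_trans hgt h2⟩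
    have hins : (insert (enum S a0 b0 hub hlb r) (S ∩ Set.Ioi (enum S a0 b0 hub hlb r))).ncard
        = r + 1 := by
      rw [Set.ncard_insert_of_notMem (by
        rintro ⟨_, h2⟩
        exact lt_irrefl _ (Set.mem_Ioi.1 h2)) (inter_Ioi_finite' hub _)]
      rw [hcard]
    have := Set.ncard_le_ncard hsub (inter_Ioi_finite' hub x)
    rw [hins, ← hr] at this
    omega

lemma enum_range : Set.range (enum S a0 b0 hub hlb) = S := by
  ext x
  constructor
  · rintro ⟨i, rfl⟩
    exact enum_mem S a0 b0 hub hlb i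
  · intro hx
    exact enum_surj S a0 b0 hub hlb hx

end
end GKS
namespace GKS
noncomputable section

lemma ncard_Ioo_int (a b : ℤ) : (Set.Ioo a b).ncard = (b - a - 1).toNat := by
  rw [← Finset.coe_Ioo, Set.ncard_coe_finset, Int.card_Ioo]

variable (S : Set ℤ) (a0 b0 : ℤ)

lemma compl_finite (hlb : ∀ x ≤ a0, x ∈ S) : (Sᶜ ∩ Set.Iio 0).Finite := by
  apply (Set.finite_Ioo a0 0).subset
  rintro x ⟨hx, hlt⟩
  refine ⟨?_, hlt⟩
  by_contra hle
  push_neg at hle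
  exact hx (hlb x hle)

lemma pos_finite (hub : ∀ x ∈ S, x ≤ b0) : (S ∩ Set.Ici 0).Finite := by
  apply (Set.finite_Icc 0 b0).subset
  rintro x ⟨hx, hge⟩
  exact ⟨hge, hub x hx⟩

lemma enum_lower (hub : ∀ x ∈ S, x ≤ b0) (hlb : ∀ x ≤ a0, x ∈ S)
    (hc : (S ∩ Set.Ici 0).ncard = (Sᶜ ∩ Set.Iio 0).ncard) (i : ℕ) :
    -(i:ℤ) - 1 ≤ enum S a0 b0 hub hlb i := by
  by_contra hcon
  push_neg at hcon
  set a := enum S a0 b0 hub hlb i with hadef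
  set c := (S ∩ Set.Ici 0).ncard with hcdef
  have ha2 : a ≤ -(i:ℤ) - 2 := by omega
  have ha0 : a < 0 := by omega
  -- P and R inside S ∩ Ioi a
  have hPR : (S ∩ Set.Ioo a 0) ∪ (S ∩ Set.Ici 0) ⊆ S ∩ Set.Ioi a := by
    rintro x (⟨hx, h1, _⟩ | ⟨hx, h1⟩)
    · exact ⟨hx, h1⟩
    · refine ⟨hx, ?_⟩
      have h0 : (0:ℤ) ≤ x := h1
      show a < x
      omega
  have hdisj : Disjoint (S ∩ Set.Ioo a 0) (S ∩ Set.Ici 0) := by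
    rw [Set.disjoint_left]
    rintro x ⟨_, _, h2⟩ ⟨_, h3⟩
    have : (0:ℤ) ≤ x := h3
    omega
  have hfinIoi := inter_Ioi_finite' hub (S' := S) (b0' := b0) a
  have hfinP : (S ∩ Set.Ioo a 0).Finite := (Set.finite_Ioo a 0).inter_of_right _
  have hfinR := pos_finite S b0 hub
  have hcard1 : (S ∩ Set.Ioo a 0).ncard + c ≤ i := by
    have h1 := Set.ncard_le_ncard hPR hfinIoi
    rw [Set.ncard_union_eq hdisj hfinP hfinR, enum_ncard_Ioi, ← hcdef] at h1
    exact h1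
  have hQ : (Sᶜ ∩ Set.Ioo a 0).ncard ≤ (Sᶜ ∩ Set.Iio 0).ncard := by
    apply Set.ncard_le_ncard _ (compl_finite S a0 hlb)
    rintro x ⟨hx, _, h2⟩
    exact ⟨hx, h2⟩
  have hsplit : Set.Ioo a 0 ⊆ (S ∩ Set.Ioo a 0) ∪ (Sᶜ ∩ Set.Ioo a 0) := by
    intro x hx
    by_cases hxS : x ∈ S
    · exact Or.inl ⟨hxS, hx⟩
    · exact Or.inr ⟨hxS, hx⟩
  have hIoo : (Set.Ioo a 0).ncard = (-a-1).toNat := by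
    rw [ncard_Ioo_int]; congr 1; ring
  have hle : (Set.Ioo a 0).ncard ≤ (S ∩ Set.Ioo a 0).ncard + (Sᶜ ∩ Set.Ioo a 0).ncard := by
    refine le_trans (Set.ncard_le_ncard hsplit (hfinP.union ((Set.finite_Ioo a 0).inter_of_right _))) ?_
    exact Set.ncard_union_le _ _
  rw [hIoo] at hle
  omega

lemma enum_eventual (hub : ∀ x ∈ S, x ≤ b0) (hlb : ∀ x ≤ a0, x ∈ S)
    (hc : (S ∩ Set.Ici 0).ncard = (Sᶜ ∩ Set.Iio 0).ncard) (i : ℕ)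
    (hsmall : enum S a0 b0 hub hlb i ≤ min a0 (-1)) :
    enum S a0 b0 hub hlb i = -(i:ℤ) - 1 := by
  set a := enum S a0 b0 hub hlb i with hadef
  set c := (S ∩ Set.Ici 0).ncard with hcdef
  have ha1 : a ≤ a0 := le_trans hsmall (min_le_left _ _)
  have ha2 : a ≤ -1 := le_trans hsmall (min_le_right _ _)
  have hQeq : Sᶜ ∩ Set.Ioo a 0 = Sᶜ ∩ Set.Iio 0 := by
    ext x
    constructor
    · rintro ⟨hx, _, h2⟩
      exact ⟨hx, h2⟩
    · rintro ⟨hx, h2⟩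
      refine ⟨hx, ?_, h2⟩
      by_contra hle
      push_neg at hle
      exact hx (hlb x (by omega))
  have hPR : (S ∩ Set.Ioo a 0) ∪ (S ∩ Set.Ici 0) = S ∩ Set.Ioi a := by
    apply Set.Subset.antisymm
    · rintro x (⟨hx, h1, _⟩ | ⟨hx, h1⟩)
      · exact ⟨hx, h1⟩
      · refine ⟨hx, ?_⟩
        have h0 : (0:ℤ) ≤ x := h1
        show a < x
        omega
    · rintro x ⟨hx, h1⟩
      rcases lt_or_ge x 0 with h | h
      · exact Or.inl ⟨hx, h1, h⟩
      · exact Or.inr ⟨hx, h⟩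
  have hdisj : Disjoint (S ∩ Set.Ioo a 0) (S ∩ Set.Ici 0) := by
    rw [Set.disjoint_left]
    rintro x ⟨_, _, h2⟩ ⟨_, h3⟩
    have : (0:ℤ) ≤ x := h3
    omega
  have hfinP : (S ∩ Set.Ioo a 0).Finite := (Set.finite_Ioo a 0).inter_of_right _
  have hfinR := pos_finite S b0 hub
  have hcard1 : (S ∩ Set.Ioo a 0).ncard + c = i := by
    have h1 := congrArg Set.ncard hPR
    rw [Set.ncard_union_eq hdisj hfinP hfinR, enum_ncard_Ioi, ← hcdef] at h1
    exact h1
  have hdisj2 : Disjoint (S ∩ Set.Ioo a 0) (Sᶜ ∩ Set.Ioo a 0) := by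
    rw [Set.disjoint_left]
    rintro x ⟨h1, _⟩ ⟨h2, _⟩
    exact h2 h1
  have hsplit : Set.Ioo a 0 = (S ∩ Set.Ioo a 0) ∪ (Sᶜ ∩ Set.Ioo a 0) := by
    apply Set.Subset.antisymm
    · intro x hx
      by_cases hxS : x ∈ S
      · exact Or.inl ⟨hxS, hx⟩
      · exact Or.inr ⟨hxS, hx⟩
    · rintro x (⟨_, hx⟩ | ⟨_, hx⟩) <;> exact hx
  have hIoo : (Set.Ioo a 0).ncard = (-a-1).toNat := by
    rw [ncard_Ioo_int]; congr 1; ring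
  have htot : (Set.Ioo a 0).ncard = (S ∩ Set.Ioo a 0).ncard + (Sᶜ ∩ Set.Ioo a 0).ncard := by
    conv_lhs => rw [hsplit]
    exact Set.ncard_union_eq hdisj2 hfinP ((Set.finite_Ioo a 0).inter_of_right _)
  rw [hQeq] at htot
  omega

/-- Any "charge 0" co-well-ordered set bounded above and cofinite below is the beta-set
of a unique partition. -/
lemma exists_partition_B_eq (hub : ∀ x ∈ S, x ≤ b0) (hlb : ∀ x ≤ a0, x ∈ S)
    (hc : (S ∩ Set.Ici 0).ncard = (Sᶜ ∩ Set.Iio 0).ncard) :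
    ∃ p : IntPartition, B p = S := by
  set e := enum S a0 b0 hub hlb with he
  have hlow : ∀ i : ℕ, -(i:ℤ) - 1 ≤ e i := enum_lower S a0 b0 hub hlb hc
  have hanti : StrictAnti e := enum_strictAnti S a0 b0 hub hlb
  have hbnd : ∀ i : ℕ, e i ≤ e 0 - i := by
    intro i
    induction i with
    | zero => simp
    | succ n ih =>
        have := enum_succ_lt S a0 b0 hub hlb n
        rw [← he] at this
        push_cast
        omega
  set I : ℕ := (e 0 - min a0 (-1)).toNat with hI
  have hvac : ∀ i : ℕ, I ≤ i → e i = -(i:ℤ) - 1 := by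
    intro i hi
    apply enum_eventual S a0 b0 hub hlb hc
    have h1 := hbnd i
    have h2 : (I:ℤ) ≤ i := by exact_mod_cast hi
    rw [← he]
    omega
  have hanti2 : Antitone (fun i => (e i + i + 1).toNat) := by
    apply antitone_nat_of_succ_le
    intro i
    have h1 := enum_succ_lt S a0 b0 hub hlb i
    rw [← he] at h1
    show (e (i+1) + (i+1) + 1).toNat ≤ (e i + i + 1).toNat
    have hcast : ((i:ℕ)+1 : ℤ) = ((i+1 : ℕ) : ℤ) := by push_cast; ring
    omega
  have hfin2 : (Function.support fun i => (e i + i + 1).toNat).Finite := by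
    apply (Set.finite_Iio I).subset
    intro i hi
    rw [Function.mem_support] at hi
    rw [Set.mem_Iio]
    by_contra hge
    push_neg at hge
    have := hvac i hge
    apply hi
    show (e i + i + 1).toNat = 0
    omega
  refine ⟨⟨fun i => (e i + i + 1).toNat, hanti2, hfin2⟩, ?_⟩
  have hbeta : beta ⟨fun i => (e i + i + 1).toNat, hanti2, hfin2⟩ = e := by
    funext i
    show ((e i + i + 1).toNat : ℤ) - i - 1 = e i
    have := hlow i
    omega
  show Set.range (beta _) = S
  rw [hbeta]
  exact enum_range S a0 b0 hub hlb

end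
end GKS
namespace GKS
noncomputable section

variable {t : ℕ}

def finOf (ht : 0 < t) (m : ℤ) : Fin t :=
  ⟨(m % (t:ℤ)).toNat, by
    have h1 : 0 ≤ m % (t:ℤ) := Int.emod_nonneg m (by positivity)
    have h2 : m % (t:ℤ) < t := Int.emod_lt_of_pos m (by exact_mod_cast ht)
    omega⟩

def Sv (ht : 0 < t) (v : Fin t → ℤ) : Set ℤ := {m | m / (t:ℤ) < v (finOf ht m)}

lemma finOf_coe (ht : 0 < t) (m : ℤ) : ((finOf ht m : ℕ) : ℤ) = m % t := by
  have h1 : 0 ≤ m % (t:ℤ) := Int.emod_nonneg m (by positivity)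
  exact Int.toNat_of_nonneg h1

lemma emod_tjk (ht : 0 < t) (k : Fin t) (j : ℤ) : ((t:ℤ) * j + ((k:ℕ):ℤ)) % t = ((k:ℕ):ℤ) := by
  have h1 : (0:ℤ) ≤ ((k:ℕ):ℤ) := Int.natCast_nonneg _
  have h2 : ((k:ℕ):ℤ) < t := by exact_mod_cast k.isLt
  rw [add_comm, Int.add_mul_emod_self_left, Int.emod_eq_of_lt h1 h2]

lemma ediv_tjk (ht : 0 < t) (k : Fin t) (j : ℤ) : ((t:ℤ) * j + ((k:ℕ):ℤ)) / t = j := by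
  have h1 : (0:ℤ) ≤ ((k:ℕ):ℤ) := Int.natCast_nonneg _
  have h2 : ((k:ℕ):ℤ) < t := by exact_mod_cast k.isLt
  rw [add_comm, mul_comm, Int.add_mul_ediv_right _ _ (by omega : (t:ℤ) ≠ 0),
    Int.ediv_eq_zero_of_lt h1 h2]
  ring

lemma finOf_tjk (ht : 0 < t) (k : Fin t) (j : ℤ) : finOf ht ((t:ℤ) * j + ((k:ℕ):ℤ)) = k := by
  apply Fin.ext
  have := finOf_coe ht ((t:ℤ) * j + ((k:ℕ):ℤ))
  rw [emod_tjk ht k j] at this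
  exact_mod_cast this

lemma mem_Sv_iff (ht : 0 < t) (v : Fin t → ℤ) (k : Fin t) (j : ℤ) :
    (t:ℤ) * j + ((k:ℕ):ℤ) ∈ Sv ht v ↔ j < v k := by
  unfold Sv
  rw [Set.mem_setOf_eq, ediv_tjk ht k j, finOf_tjk ht k j]

lemma Sv_closed (ht : 0 < t) (v : Fin t → ℤ) {m : ℤ} (hm : m ∈ Sv ht v) :
    m - t ∈ Sv ht v := by
  have ht0 : (t:ℤ) ≠ 0 := by positivity
  have hdiv : (m - t) / t = m / t - 1 := by
    have : m - t = m + (-1) * t := by ring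
    rw [this, Int.add_mul_ediv_right _ _ ht0]
    omega
  have hmod : (m - t) % t = m % t := by
    have : m - t = m + (-1) * t := by ring
    rw [this, Int.add_mul_emod_self_right]
  have hfin : finOf ht (m - t) = finOf ht m := by
    apply Fin.ext
    have h1 := finOf_coe ht (m - t)
    have h2 := finOf_coe ht m
    rw [hmod] at h1
    omega
  unfold Sv at hm ⊢
  rw [Set.mem_setOf_eq, hdiv, hfin]
  rw [Set.mem_setOf_eq] at hm
  omega

lemma exists_core_spec (ht : 0 < t) (v : Fin t → ℤ) (hsum : ∑ k, v k = 0) :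
    ∃ p : IntPartition, p.IsCore t ∧ Spec t p v := by
  classical
  have ht' : (0:ℤ) < t := by exact_mod_cast ht
  set C : ℤ := (∑ k, |v k|) + 1 with hC
  have hvC : ∀ k, |v k| < C := by
    intro k
    have h1 : |v k| ≤ ∑ k', |v k'| :=
      Finset.single_le_sum (f := fun k' => |v k'|) (fun i _ => abs_nonneg _) (Finset.mem_univ k)
    omega
  have hub : ∀ m ∈ Sv ht v, m ≤ (t:ℤ) * C := by
    intro m hm
    unfold Sv at hm
    rw [Set.mem_setOf_eq] at hm
    have h1 : m / t ≤ C - 1 := by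
      have := hvC (finOf ht m)
      have h2 : v (finOf ht m) ≤ |v (finOf ht m)| := le_abs_self _
      omega
    have h2 := mul_le_mul_of_nonneg_left h1 (le_of_lt ht')
    have h3 : (t:ℤ) * (m / t) + m % t = m := Int.mul_ediv_add_emod m t
    have h4 : m % t < t := Int.emod_lt_of_pos m ht'
    have h5 : (t:ℤ) * (C - 1) = t * C - t := by ring
    omega
  have hlb : ∀ m ≤ (t:ℤ) * (-C), m ∈ Sv ht v := by
    intro m hm
    unfold Sv
    rw [Set.mem_setOf_eq]
    have h1 : m / t ≤ ((t:ℤ) * (-C)) / t := Int.ediv_le_ediv ht' hm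
    rw [Int.mul_ediv_cancel_left _ (by omega : (t:ℤ) ≠ 0)] at h1
    have h2 : -|v (finOf ht m)| ≤ v (finOf ht m) := neg_abs_le _
    have h3 := hvC (finOf ht m)
    omega
  -- charge computation
  set Fpos : Finset ℤ :=
    Finset.univ.biUnion (fun k : Fin t => (Finset.Ico (0:ℤ) (v k)).image
      (fun j => (t:ℤ) * j + ((k:ℕ):ℤ))) with hFpos
  set Fneg : Finset ℤ :=
    Finset.univ.biUnion (fun k : Fin t => (Finset.Ico (v k) (0:ℤ)).image
      (fun j => (t:ℤ) * j + ((k:ℕ):ℤ))) with hFneg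
  have hinj : ∀ k : Fin t, Function.Injective (fun j => (t:ℤ) * j + ((k:ℕ):ℤ)) := by
    intro k a b hab
    simp only at hab
    have : (t:ℤ) * a = t * b := by omega
    exact mul_left_cancel₀ (by omega) this
  have hdisj2 : ∀ (I : Fin t → Finset ℤ) (k k' : Fin t), k ≠ k' →
      Disjoint ((I k).image (fun j => (t:ℤ) * j + ((k:ℕ):ℤ)))
        ((I k').image (fun j => (t:ℤ) * j + ((k':ℕ):ℤ))) := by
    intro I k k' hkk
    rw [Finset.disjoint_left]
    rintro x hx hx'
    rcases Finset.mem_image.1 hx with ⟨j, _, rfl⟩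
    rcases Finset.mem_image.1 hx' with ⟨j', _, he⟩
    have e1 := emod_tjk ht k j
    have e2 := emod_tjk ht k' j'
    rw [he] at e2
    rw [e1] at e2
    exact hkk (Fin.ext (by exact_mod_cast e2))
  have hposeq : Sv ht v ∩ Set.Ici 0 = ↑Fpos := by
    ext m
    rw [Set.mem_inter_iff, Finset.mem_coe, hFpos, Finset.mem_biUnion]
    constructor
    · rintro ⟨hm, hge⟩
      rw [Set.mem_Ici] at hge
      refine ⟨finOf ht m, Finset.mem_univ _, Finset.mem_image.2 ⟨m / t,
        Finset.mem_Ico.2 ⟨Int.ediv_nonneg hge (le_of_lt ht'), hm⟩, ?_⟩⟩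
      rw [finOf_coe]
      exact Int.mul_ediv_add_emod m t
    · rintro ⟨k, _, hmem⟩
      rcases Finset.mem_image.1 hmem with ⟨j, hj, rfl⟩
      rcases Finset.mem_Ico.1 hj with ⟨h0, hj2⟩
      refine ⟨(mem_Sv_iff ht v k j).2 hj2, Set.mem_Ici.2 ?_⟩
      have h1 : (0:ℤ) ≤ ((k:ℕ):ℤ) := Int.natCast_nonneg _
      nlinarith
  have hnegeq : (Sv ht v)ᶜ ∩ Set.Iio 0 = ↑Fneg := by
    ext m
    rw [Set.mem_inter_iff, Finset.mem_coe, hFneg, Finset.mem_biUnion]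
    constructor
    · rintro ⟨hm, hlt⟩
      rw [Set.mem_Iio] at hlt
      rw [Set.mem_compl_iff] at hm
      unfold Sv at hm
      rw [Set.mem_setOf_eq] at hm
      push_neg at hm
      refine ⟨finOf ht m, Finset.mem_univ _, Finset.mem_image.2 ⟨m / t,
        Finset.mem_Ico.2 ⟨hm, Int.ediv_neg_of_neg_of_pos hlt ht'⟩, ?_⟩⟩
      rw [finOf_coe]
      exact Int.mul_ediv_add_emod m t
    · rintro ⟨k, _, hmem⟩
      rcases Finset.mem_image.1 hmem with ⟨j, hj, rfl⟩
      rcases Finset.mem_Ico.1 hj with ⟨hj1, hj0⟩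
      constructor
      · rw [Set.mem_compl_iff]
        intro hmem'
        rw [mem_Sv_iff ht v k j] at hmem'
        omega
      · rw [Set.mem_Iio]
        have h1 : ((k:ℕ):ℤ) < t := by exact_mod_cast k.isLt
        have h2 : j ≤ -1 := by omega
        have h3 := mul_le_mul_of_nonneg_left h2 (le_of_lt ht')
        have h4 : (t:ℤ) * (-1) = -t := by ring
        omega
  have hcpos : (Sv ht v ∩ Set.Ici 0).ncard = ∑ k, (v k).toNat := by
    rw [hposeq, Set.ncard_coe_finset, hFpos,
      Finset.card_biUnion (fun k _ k' _ hkk => hdisj2 (fun k => Finset.Ico (0:ℤ) (v k)) k k' hkk)]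
    apply Finset.sum_congr rfl
    intro k _
    rw [Finset.card_image_of_injective _ (hinj k), Int.card_Ico, sub_zero]
  have hcneg : ((Sv ht v)ᶜ ∩ Set.Iio 0).ncard = ∑ k, (-v k).toNat := by
    rw [hnegeq, Set.ncard_coe_finset, hFneg,
      Finset.card_biUnion (fun k _ k' _ hkk => hdisj2 (fun k => Finset.Ico (v k) (0:ℤ)) k k' hkk)]
    apply Finset.sum_congr rfl
    intro k _
    rw [Finset.card_image_of_injective _ (hinj k), Int.card_Ico, zero_sub]
  have hc : (Sv ht v ∩ Set.Ici 0).ncard = ((Sv ht v)ᶜ ∩ Set.Iio 0).ncard := by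
    rw [hcpos, hcneg]
    have hz : ((∑ k, (v k).toNat : ℕ) : ℤ) = ((∑ k, (-v k).toNat : ℕ) : ℤ) := by
      rw [Nat.cast_sum, Nat.cast_sum, ← sub_eq_zero, ← Finset.sum_sub_distrib]
      rw [show (0:ℤ) = ∑ k : Fin t, v k from hsum.symm]
      apply Finset.sum_congr rfl
      intro k _
      omega
    exact_mod_cast hz
  obtain ⟨p, hp⟩ := exists_partition_B_eq (Sv ht v) ((t:ℤ) * (-C)) ((t:ℤ) * C) hub hlb hc
  refine ⟨p, ?_, ?_⟩
  · rw [isCore_iff_closed]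
    intro x hx
    rw [hp] at hx ⊢
    exact Sv_closed ht v hx
  · intro k j
    rw [hp]
    exact mem_Sv_iff ht v k j

end
end GKS
theorem gks_bijection (t : ℕ) (ht : 0 < t) :
    ∃ Φ : {p : IntPartition // p.IsCore t} ≃ {v : Fin t → ℤ // ∑ i, v i = 0},
      ∀ p : {p : IntPartition // p.IsCore t},
        (p.1.weight : ℚ) =
          (t : ℚ) / 2 * ∑ i, (((Φ p).1 i : ℚ)) ^ 2 + ∑ i, (i.val : ℚ) * ((Φ p).1 i : ℚ) := by
  classical
  have hFex : ∀ p : {p : IntPartition // p.IsCore t}, ∃ v : Fin t → ℤ, GKS.Spec t p.1 v :=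
    fun p => GKS.exists_spec ht p.2
  choose V hV using hFex
  have hsumV : ∀ p, ∑ i, V p i = 0 := fun p => (GKS.spec_main ht (hV p)).1
  set F : {p : IntPartition // p.IsCore t} → {v : Fin t → ℤ // ∑ i, v i = 0} :=
    fun p => ⟨V p, hsumV p⟩ with hF
  have hinj : Function.Injective F := by
    intro p q hpq
    have hVeq : V p = V q := congrArg Subtype.val hpq
    apply Subtype.ext
    exact GKS.spec_injective ht (hV p) (hVeq ▸ hV q)
  have hsurj : Function.Surjective F := by
    rintro ⟨v, hv⟩
    obtain ⟨p, hcore, hspec⟩ := GKS.exists_core_spec ht v hv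
    refine ⟨⟨p, hcore⟩, ?_⟩
    apply Subtype.ext
    exact GKS.spec_unique (hV ⟨p, hcore⟩) hspec
  refine ⟨Equiv.ofBijective F ⟨hinj, hsurj⟩, ?_⟩
  intro p
  have h2 := (GKS.spec_main ht (hV p)).2
  show (p.1.weight : ℚ) =
      (t : ℚ) / 2 * ∑ i, ((V p i : ℚ)) ^ 2 + ∑ i, (i.val : ℚ) * (V p i : ℚ)
  have hcast := congrArg (fun z : ℤ => (z : ℚ)) h2
  push_cast at hcast
  have e : ∑ k : Fin t, ((t:ℚ) * (V p k : ℚ)^2 + 2 * ((k.val : ℕ):ℚ) * (V p k : ℚ))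
      = (t:ℚ) * ∑ k, (V p k : ℚ)^2 + 2 * ∑ k, ((k.val : ℕ):ℚ) * (V p k : ℚ) := by
    rw [Finset.sum_add_distrib, ← Finset.mul_sum]
    congr 1
    rw [Finset.mul_sum]
    apply Finset.sum_congr rfl
    intro k _
    ring
  rw [e] at hcast
  linear_combination hcast / 2
end
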